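/- arXiv:2202.11927 — 6 statements merged into one kernel-verified Lean document; each statement's English description precedes it below -/
import Mathlib

section
/- Let G be a finite directed acyclic graph with distinguished vertices s and t such that every vertex and every edge lies on some directed s-t path, and let T be a tracking set for G, i.e., for any two distinct directed s-t paths P₁, P₂ we have T ∩ V(P₁) ≠ T ∩ V(P₂). For a vertex x ∈ V \ {t}, let Z_x be the set of vertices z reachable from x by a directed path avoiding all vertices of (T ∪ {t}) \ {x}. Then no vertex of G is the head of two distinct edges whose tails both lie in Z_x. -/
/-- A directed path from `s` to `t` in the digraph with edge relation `E`,
represented as its list of vertices. -/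
def DiPath {V : Type*} (E : V → V → Prop) (s t : V) (p : List V) : Prop :=
  p.Chain' E ∧ p.Nodup ∧ p.head? = some s ∧ p.getLast? = some t

/-- `T` is a tracking set: any two distinct directed `s`-`t` paths intersect `T`
in distinct subsets. -/
def Tracking {V : Type*} [DecidableEq V] (E : V → V → Prop) (s t : V) (T : Finset V) : Prop :=
  ∀ p q : List V, DiPath E s t p → DiPath E s t q →
    p.toFinset ∩ T = q.toFinset ∩ T → p = q

/-- The digraph with edge relation `E` has no directed cycle. -/
def DiAcyclic {V : Type*} (E : V → V → Prop) : Prop :=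
  ∀ v : V, ¬ Relation.TransGen E v v

/-- `z` is reachable from `x` by a directed path avoiding all vertices of
`(T ∪ {t}) \ {x}`, i.e. `z ∈ Z_x`. -/
def ZReach {V : Type*} [DecidableEq V] (E : V → V → Prop) (T : Finset V) (t x z : V) : Prop :=
  ∃ p : List V, p.Chain' E ∧ p.Nodup ∧ p.head? = some x ∧ p.getLast? = some z ∧
    ∀ v ∈ p, v ∈ T ∪ {t} → v = x

/-- `b` is reachable from `x` by a directed path avoiding all vertices of
`(T ∪ {t}) \ {x, b}`. -/
def BReach {V : Type*} [DecidableEq V] (E : V → V → Prop) (T : Finset V) (t x b : V) : Prop :=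
  ∃ p : List V, p.Chain' E ∧ p.Nodup ∧ p.head? = some x ∧ p.getLast? = some b ∧
    ∀ v ∈ p, v ∈ T ∪ {t} → v = x ∨ v = b

/-- The out-degree of `z`. -/
def outdeg {V : Type*} [Fintype V] (E : V → V → Prop) [DecidableRel E] (z : V) : ℕ :=
  (Finset.univ.filter fun y => E z y).card

/-- The in-degree of `z`. -/
def indeg {V : Type*} [Fintype V] (E : V → V → Prop) [DecidableRel E] (z : V) : ℕ :=
  (Finset.univ.filter fun y => E y z).card

/-!
The two tails `z, z'` are reached from `x` by walks `p, p'` meeting `T` only in `x`. Extend both by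
the same prefix `s ⇝ x` and the same suffix `y ⇝ t`: acyclicity makes the results `s`-`t` paths,
and they meet `T` in the same set, so tracking forces `p = p'`, hence `z = z'`.
-/

def DiWalk {V : Type*} (E : V → V → Prop) (u v : V) (p : List V) : Prop :=
  p.IsChain E ∧ p.head? = some u ∧ p.getLast? = some v

theorem List.IsChain.nodup_of_diAcyclic {V : Type*} {E : V → V → Prop} (h : DiAcyclic E)
    {l : List V} (hl : l.IsChain E) : l.Nodup := by
  have hpair : l.Pairwise (Relation.TransGen E) :=
    List.isChain_iff_pairwise.mp (hl.imp fun _ _ => Relation.TransGen.single)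
  refine hpair.imp fun {a b} hab hEq => ?_
  subst hEq
  exact h a hab

namespace DiWalk

variable {V : Type*} {E : V → V → Prop} {u v v' w : V} {p q : List V}

theorem diPath (hacyc : DiAcyclic E) (h : DiWalk E u v p) : DiPath E u v p :=
  ⟨h.1, h.1.nodup_of_diAcyclic hacyc, h.2⟩

theorem append (hp : DiWalk E u v p) (hq : DiWalk E v' w q) (e : E v v') :
    DiWalk E u w (p ++ q) := by
  obtain ⟨hpc, hph, hpl⟩ := hp
  obtain ⟨hqc, hqh, hql⟩ := hq
  have hq0 : q ≠ [] := by rintro rfl; simp at hqh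
  refine ⟨hpc.append hqc ?_, ?_, ?_⟩
  · simpa [hpl, hqh] using e
  · rw [List.head?_append, hph]
    rfl
  · rwa [List.getLast?_append_of_ne_nil _ hq0]

theorem append_of_concat {a : List V} (ha : DiWalk E u v (a ++ [v])) (hq : DiWalk E v w q) :
    DiWalk E u w (a ++ q) := by
  obtain ⟨hac, hah, -⟩ := ha
  obtain ⟨hqc, hqh, hql⟩ := hq
  have hq0 : q ≠ [] := by rintro rfl; simp at hqh
  refine ⟨(List.isChain_append.mp hac).1.append hqc ?_, ?_, ?_⟩
  · intro x hx y hy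
    rw [hqh, Option.mem_some_iff] at hy
    subst hy
    exact (List.isChain_append.mp hac).2.2 x hx _ (by simp)
  · rw [List.head?_append, hqh]
    simpa using hah
  · rwa [List.getLast?_append_of_ne_nil _ hq0]

end DiWalk

theorem DiPath.exists_split {V : Type*} {E : V → V → Prop} {s t v : V} {P : List V}
    (hP : DiPath E s t P) (hv : v ∈ P) :
    ∃ a b : List V, DiWalk E s v (a ++ [v]) ∧ DiWalk E v t (v :: b) := by
  obtain ⟨a, b, rfl⟩ := List.append_of_mem hv
  obtain ⟨hc, -, hh, hl⟩ := hP
  obtain ⟨hac, hbc, hab⟩ := List.isChain_append.mp hc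
  refine ⟨a, b, ⟨hac.append (by simp) (by simpa using hab), ?_, by simp⟩, hbc, by simp, ?_⟩
  · rwa [List.head?_append] at hh ⊢
  · rwa [List.getLast?_append_of_ne_nil _ (List.cons_ne_nil _ _)] at hl

theorem ZReach.exists_diWalk {V : Type*} [DecidableEq V] {E : V → V → Prop} {T : Finset V}
    {t x z : V} (h : ZReach E T t x z) :
    ∃ p : List V, DiWalk E x z p ∧ p.toFinset ∩ T = {x} ∩ T := by
  obtain ⟨p, hc, -, hh, hl, hT⟩ := h
  refine ⟨p, ⟨hc, hh, hl⟩, ?_⟩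
  ext v
  simp only [Finset.mem_inter, List.mem_toFinset, Finset.mem_singleton]
  constructor
  · rintro ⟨hv, hvT⟩
    exact ⟨hT v hv (Finset.mem_union_left _ hvT), hvT⟩
  · rintro ⟨rfl, hvT⟩
    exact ⟨List.mem_of_mem_head? hh, hvT⟩

theorem Tracking.eq_of_diWalk {V : Type*} [DecidableEq V] {E : V → V → Prop} {s t : V}
    {T : Finset V} (hT : Tracking E s t T) (hacyc : DiAcyclic E)
    {x y z z' : V} {p p' : List V} {Px Py : List V}
    (hPx : DiPath E s t Px) (hx : x ∈ Px) (hPy : DiPath E s t Py) (hy : y ∈ Py)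
    (hp : DiWalk E x z p) (hp' : DiWalk E x z' p') (hzy : E z y) (hz'y : E z' y)
    (hpT : p.toFinset ∩ T = p'.toFinset ∩ T) : p = p' := by
  obtain ⟨a, -, ha, -⟩ := hPx.exists_split hx
  obtain ⟨-, d, -, hd⟩ := hPy.exists_split hy
  have hpath : DiPath E s t (a ++ p ++ y :: d) :=
    ((ha.append_of_concat hp).append hd hzy).diPath hacyc
  have hpath' : DiPath E s t (a ++ p' ++ y :: d) :=
    ((ha.append_of_concat hp').append hd hz'y).diPath hacyc
  have hinter : (a ++ p ++ y :: d).toFinset ∩ T = (a ++ p' ++ y :: d).toFinset ∩ T := by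
    simp only [List.toFinset_append, Finset.union_inter_distrib_right, hpT]
  exact List.append_cancel_left (List.append_cancel_right (hT _ _ hpath hpath' hinter))

theorem no_two_edges_from_Zx_same_head_general {V : Type*} [DecidableEq V]
    (E : V → V → Prop) (s t : V)
    (hacyc : DiAcyclic E)
    (hvert : ∀ v : V, ∃ p : List V, DiPath E s t p ∧ v ∈ p)
    (T : Finset V) (hT : Tracking E s t T)
    (x : V) :
    ∀ y z z' : V, E z y → E z' y → ZReach E T t x z → ZReach E T t x z' → z = z' := by
  intro y z z' hzy hz'y hz hz'
  obtain ⟨p, hp, hpT⟩ := hz.exists_diWalk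
  obtain ⟨p', hp', hp'T⟩ := hz'.exists_diWalk
  obtain ⟨Px, hPx, hxPx⟩ := hvert x
  obtain ⟨Py, hPy, hyPy⟩ := hvert y
  have hpp' : p = p' :=
    hT.eq_of_diWalk hacyc hPx hxPx hPy hyPy hp hp' hzy hz'y (hpT.trans hp'T.symm)
  subst hpp'
  exact Option.some.inj (hp.2.2.symm.trans hp'.2.2)

/-- in a DAG where every vertex and edge lies on a directed `s`-`t` path,
with tracking set `T` and `x ≠ t`, no vertex is the head of two distinct edges whose
tails both lie in `Z_x`. -/
theorem no_two_edges_from_Zx_same_head {V : Type*} [Fintype V] [DecidableEq V]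
    (E : V → V → Prop) (s t : V)
    (hacyc : DiAcyclic E)
    (hvert : ∀ v : V, ∃ p : List V, DiPath E s t p ∧ v ∈ p)
    (hedge : ∀ u v : V, E u v → ∃ p : List V, DiPath E s t p ∧ [u, v] <:+: p)
    (T : Finset V) (hT : Tracking E s t T)
    (x : V) (hx : x ≠ t) :
    ∀ y z z' : V, E z y → E z' y → ZReach E T t x z → ZReach E T t x z' → z = z' :=
  no_two_edges_from_Zx_same_head_general E s t hacyc hvert T hT x
end

section
/- Let G be a finite directed acyclic graph with source s and sink t such that every vertex and edge lies on some directed s-t path, and let T be a tracking set. For x ∈ V \ {t}, let Z_x be the set of vertices reachable from x avoiding (T ∪ {t}) \ {x}, and let B_x be the set of vertices b ∈ T ∪ {t} reachable from x by a directed path avoiding (T ∪ {t}) \ {x, b}. Then ∑_{z ∈ Z_x} (outdeg(z) − 1) ≤ |B_x|. -/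
/-! If `z₁, z₂ ∈ Z_x` have a common out-neighbour `y`, splice the walks `x ⇝ zᵢ → y` between
a fixed `s ⇝ x` and a fixed `y ⇝ t` segment of `s`-`t` paths. Each walk meets `T` at most in
`x`, so the two resulting `s`-`t` paths meet `T` in the same set and coincide by tracking; hence
`z₁ = z₂`.
So the out-neighbourhoods of the vertices of `Z_x` are disjoint, and they lie in
`(Z_x \ {x}) ∪ B_x` (an out-neighbour is never `x` by acyclicity), which gives
`∑_{z ∈ Z_x} outdeg z ≤ |Z_x| - 1 + |B_x|`. -/

open Finset

section

variable {V : Type*} {E : V → V → Prop}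

theorem DiAcyclic.nodup_of_isChain (hE : DiAcyclic E) {l : List V} (h : l.IsChain E) :
    l.Nodup := by
  refine List.Pairwise.imp ?_ (h.imp fun _ _ => Relation.TransGen.single).pairwise
  rintro a _ ha rfl
  exact hE a ha

theorem List.IsChain.concat_of_getLast? {l : List V} {z y : V} (hl : l.IsChain E)
    (hz : l.getLast? = some z) (hzy : E z y) : (l ++ [y]).IsChain E :=
  hl.append (.singleton y) (by simp [hz, hzy])

theorem DiPath.splice (hE : DiAcyclic E) {s t x y : V} {l₁ l₂ m₁ m₂ w : List V}
    (hP : DiPath E s t (l₁ ++ x :: l₂)) (hQ : DiPath E s t (m₁ ++ y :: m₂))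
    (hw : (x :: (w ++ [y])).IsChain E) : DiPath E s t (l₁ ++ x :: w ++ y :: m₂) := by
  have hchain : (l₁ ++ x :: w ++ y :: m₂).IsChain E := by
    have h₁ : (l₁ ++ [x]).IsChain E := hP.1.prefix ⟨l₂, by simp⟩
    have h₂ : ([y] ++ m₂).IsChain E := hQ.1.suffix ⟨m₁, by simp⟩
    have h₃ : (l₁ ++ x :: w ++ [y]).IsChain E := by simpa using h₁.append_overlap hw (by simp)
    simpa using h₃.append_overlap h₂ (by simp)
  refine ⟨hchain, hE.nodup_of_isChain hchain, ?_, ?_⟩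
  · simpa [List.head?_append] using hP.2.2.1
  · have hQt := hQ.2.2.2
    rwa [List.getLast?_append_cons] at hQt ⊢

theorem Tracking.eq_of_append [DecidableEq V] {s t : V} {T : Finset V}
    (hT : Tracking E s t T) {l₁ l₂ p q : List V}
    (hp : DiPath E s t (l₁ ++ p ++ l₂)) (hq : DiPath E s t (l₁ ++ q ++ l₂))
    (hpq : ∀ v ∈ T, v ∈ p ↔ v ∈ q) : p = q := by
  refine List.append_cancel_left (List.append_cancel_right (hT _ _ hp hq ?_))
  ext v
  simp only [mem_inter, List.mem_toFinset, List.mem_append]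
  constructor <;> rintro ⟨hv, hvT⟩ <;> simp only [hpq v hvT] at hv ⊢ <;> exact ⟨hv, hvT⟩

namespace ZReach

variable [DecidableEq V] {T : Finset V} {t x y z : V}

theorem refl : ZReach E T t x x :=
  ⟨[x], .singleton x, List.nodup_singleton x, rfl, rfl, by simp⟩

theorem reflTransGen (h : ZReach E T t x z) : Relation.ReflTransGen E x z := by
  obtain ⟨p, hc, -, hh, hl, -⟩ := h
  obtain ⟨r, rfl⟩ := List.head?_eq_some_iff.1 hh
  exact List.relationReflTransGen_of_exists_isChain_cons r hc
    (Option.some_inj.1 ((List.getLast?_eq_some_getLast _).symm.trans hl))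

theorem ne_of_adj (hE : DiAcyclic E) (h : ZReach E T t x z) (hzy : E z y) : y ≠ x := by
  rintro rfl
  exact hE y (.tail' h.reflTransGen hzy)

theorem bReach_of_adj (hE : DiAcyclic E) (h : ZReach E T t x z) (hzy : E z y) :
    BReach E T t x y := by
  obtain ⟨p, hc, -, hh, hl, hav⟩ := h
  have hc' := hc.concat_of_getLast? hl hzy
  refine ⟨p ++ [y], hc', hE.nodup_of_isChain hc', by simp [List.head?_append, hh], by simp, ?_⟩
  intro v hv hvT
  rcases List.mem_append.1 hv with hv | hv
  · exact .inl (hav v hv hvT)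
  · exact .inr (List.mem_singleton.1 hv)

theorem exists_cons_of_adj (h : ZReach E T t x z) (hzy : E z y) :
    ∃ r, (x :: r).getLast? = some z ∧ (x :: (r ++ [y])).IsChain E ∧
      ∀ v ∈ T, v ∈ x :: r ↔ v = x := by
  obtain ⟨p, hc, -, hh, hl, hav⟩ := h
  obtain ⟨r, rfl⟩ := List.head?_eq_some_iff.1 hh
  refine ⟨r, hl, hc.concat_of_getLast? hl hzy, fun v hvT => ⟨fun hv => hav v hv ?_, ?_⟩⟩
  · exact mem_union_left _ hvT
  · rintro rfl; exact List.mem_cons_self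

theorem eq_of_adj (hE : DiAcyclic E) {s : V}
    (hvert : ∀ v : V, ∃ p : List V, DiPath E s t p ∧ v ∈ p) (hT : Tracking E s t T)
    {z₁ z₂ : V} (h₁ : ZReach E T t x z₁) (h₂ : ZReach E T t x z₂)
    (hy₁ : E z₁ y) (hy₂ : E z₂ y) : z₁ = z₂ := by
  obtain ⟨P, hP, hxP⟩ := hvert x
  obtain ⟨l₁, l₂, rfl⟩ := List.append_of_mem hxP
  obtain ⟨Q, hQ, hyQ⟩ := hvert y
  obtain ⟨m₁, m₂, rfl⟩ := List.append_of_mem hyQ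
  obtain ⟨r₁, hz₁, hc₁, htr₁⟩ := h₁.exists_cons_of_adj hy₁
  obtain ⟨r₂, hz₂, hc₂, htr₂⟩ := h₂.exists_cons_of_adj hy₂
  have hr : x :: r₁ = x :: r₂ := hT.eq_of_append (hP.splice hE hQ hc₁) (hP.splice hE hQ hc₂)
    fun v hv => (htr₁ v hv).trans (htr₂ v hv).symm
  rw [hr, hz₂] at hz₁
  exact (Option.some_inj.1 hz₁).symm

end ZReach

theorem BReach.zReach [DecidableEq V] {T : Finset V} {t x y : V} (h : BReach E T t x y)
    (hy : y ∉ T ∪ {t}) : ZReach E T t x y := by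
  obtain ⟨p, hc, hn, hh, hl, hav⟩ := h
  exact ⟨p, hc, hn, hh, hl, fun v hv hvT =>
    (hav v hv hvT).resolve_right fun hvy => hy (hvy ▸ hvT)⟩

theorem sum_outdeg_le_card [Fintype V] [DecidableEq V] [DecidableRel E] {S U : Finset V}
    (hinj : ∀ z₁ ∈ S, ∀ z₂ ∈ S, ∀ y, E z₁ y → E z₂ y → z₁ = z₂)
    (hU : ∀ z ∈ S, ∀ y, E z y → y ∈ U) : ∑ z ∈ S, outdeg E z ≤ #U := by
  unfold outdeg
  rw [← card_biUnion]
  · refine card_le_card fun y hy => ?_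
    obtain ⟨z, hz, hzy⟩ := mem_biUnion.1 hy
    exact hU z hz y (mem_filter.1 hzy).2
  · intro z₁ h₁ z₂ h₂ hne
    refine disjoint_left.2 fun y hy₁ hy₂ => hne ?_
    exact hinj z₁ h₁ z₂ h₂ y (mem_filter.1 hy₁).2 (mem_filter.1 hy₂).2

end

theorem sum_outdeg_Zx_le_Bx_general {V : Type*} [Fintype V] [DecidableEq V]
    (E : V → V → Prop) [DecidableRel E] (s t : V)
    (hacyc : DiAcyclic E)
    (hvert : ∀ v : V, ∃ p : List V, DiPath E s t p ∧ v ∈ p)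
    (T : Finset V) (hT : Tracking E s t T)
    (x : V)
    (Zx Bx : Finset V)
    (hZx : ∀ z : V, z ∈ Zx ↔ ZReach E T t x z)
    (hBx : ∀ b : V, b ∈ Bx ↔ b ∈ T ∪ {t} ∧ BReach E T t x b) :
    (∑ z ∈ Zx, ((outdeg E z : ℤ) - 1)) ≤ (Bx.card : ℤ) := by
  have hxZ : x ∈ Zx := (hZx x).2 ZReach.refl
  have hcount : ∑ z ∈ Zx, outdeg E z ≤ #(Zx.erase x ∪ Bx) := by
    refine sum_outdeg_le_card (fun z₁ h₁ z₂ h₂ y hy₁ hy₂ =>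
      ((hZx z₁).1 h₁).eq_of_adj hacyc hvert hT ((hZx z₂).1 h₂) hy₁ hy₂) fun z hz y hzy => ?_
    have hzZ := (hZx z).1 hz
    have hyB := hzZ.bReach_of_adj hacyc hzy
    by_cases hy : y ∈ T ∪ {t}
    · exact mem_union_right _ ((hBx y).2 ⟨hy, hyB⟩)
    · exact mem_union_left _
        (mem_erase.2 ⟨hzZ.ne_of_adj hacyc hzy, (hZx y).2 (hyB.zReach hy)⟩)
  have hZcard := card_erase_add_one hxZ
  have hunion := card_union_le (Zx.erase x) Bx
  rw [sum_sub_distrib, sum_const, nsmul_one, ← Nat.cast_sum]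
  omega

/-- `∑_{z ∈ Z_x} (outdeg z − 1) ≤ |B_x|`. -/
theorem sum_outdeg_Zx_le_Bx {V : Type*} [Fintype V] [DecidableEq V]
    (E : V → V → Prop) [DecidableRel E] (s t : V)
    (hacyc : DiAcyclic E)
    (hsrc : ∀ v : V, ¬ E v s) (hsink : ∀ v : V, ¬ E t v)
    (hvert : ∀ v : V, ∃ p : List V, DiPath E s t p ∧ v ∈ p)
    (hedge : ∀ u v : V, E u v → ∃ p : List V, DiPath E s t p ∧ [u, v] <:+: p)
    (T : Finset V) (hT : Tracking E s t T)
    (x : V) (hx : x ≠ t)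
    (Zx Bx : Finset V)
    (hZx : ∀ z : V, z ∈ Zx ↔ ZReach E T t x z)
    (hBx : ∀ b : V, b ∈ Bx ↔ b ∈ T ∪ {t} ∧ BReach E T t x b) :
    (∑ z ∈ Zx, ((outdeg E z : ℤ) - 1)) ≤ (Bx.card : ℤ) :=
  sum_outdeg_Zx_le_Bx_general E s t hacyc hvert T hT x Zx Bx hZx hBx
end

section
/- Let G be a finite directed acyclic graph with source s and sink t, without parallel edges, and let G' be obtained from G by subdividing a single edge (u,w) into (u,v),(v,w) with a new vertex v. Then G has a tracking set of size at most k if and only if G' has a tracking set of size at most k. -/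
/-!
Paths of `G` and of the subdivided graph `G'` correspond bijectively (insert or delete `v`), and
a path of `G'` passes through `v` exactly when the corresponding path of `G` uses the edge
`(u, w)`. So a tracking set of `G` is one of `G'`, and a tracking set `T'` of `G'` avoiding `v`
is one of `G`. If `v ∈ T'`, then `S = T' \ {v}` separates any two paths of `G` that agree on the
use of `(u, w)`; call a path `p` through `(u, w)` and a path `q` avoiding it confusable if `S`
does not separate them. One vertex `x` added to `S` separates all confusable pairs:
* if some confusable `q` visits `u` and `w`, let `x` be a vertex of `q` strictly between them.
  By acyclicity such vertices lie outside `S` and outside every path through `(u, w)`; rerouting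
  the first path of a pair confusable for `S ∪ {x}` along this segment of `q` gives, by `S`, the
  second path, which then contains `x`;
* otherwise, if some confusable `q₂` (paired with `p₂`) visits `u`, take `x = w`: in a pair
  `(p₁, q₁)` confusable for `S ∪ {w}`, `q₁` visits `w` but not `u`, and splicing `p₁` with `q₂` at
  `u` and `q₁` with `p₂` at `w` gives two paths avoiding `(u, w)`, with the same trace on `S`,
  of which only the first visits `u`;
* otherwise take `x = u`.
-/

section

open List Relation

variable {V : Type*} {E : V → V → Prop} {s t u w x y : V} {A B C D p q : List V}

theorem List.IsChain.pairwise_transGen {l : List V} (h : l.IsChain E) :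
    l.Pairwise (TransGen E) :=
  (h.imp fun _ _ => TransGen.single).pairwise

namespace DiAcyclic

theorem nodup_of_isChain_s9 (hE : DiAcyclic E) {l : List V} (h : l.IsChain E) : l.Nodup :=
  h.pairwise_transGen.imp fun {a b} (hab : TransGen E a b) (hEq : a = b) => hE b (hEq ▸ hab)

theorem mem_left_iff_transGen (hE : DiAcyclic E) (h : (A ++ x :: B).IsChain E) :
    y ∈ A ↔ y ∈ A ++ x :: B ∧ TransGen E y x := by
  obtain ⟨-, ⟨hxB, -⟩, hAx⟩ := by
    simpa only [pairwise_append, pairwise_cons] using h.pairwise_transGen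
  refine ⟨fun hy => ⟨mem_append_left _ hy, hAx y hy x mem_cons_self⟩, ?_⟩
  rintro ⟨hy, hyx⟩
  simp only [mem_append, mem_cons] at hy
  rcases hy with hy | rfl | hy
  · exact hy
  · exact (hE _ hyx).elim
  · exact (hE _ (hyx.trans (hxB y hy))).elim

theorem mem_right_iff_transGen (hE : DiAcyclic E) (h : (A ++ x :: B).IsChain E) :
    y ∈ B ↔ y ∈ A ++ x :: B ∧ TransGen E x y := by
  obtain ⟨-, ⟨hxB, -⟩, hAx⟩ := by
    simpa only [pairwise_append, pairwise_cons] using h.pairwise_transGen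
  refine ⟨fun hy => ⟨by simp [hy], hxB y hy⟩, ?_⟩
  rintro ⟨hy, hxy⟩
  simp only [mem_append, mem_cons] at hy
  rcases hy with hy | rfl | hy
  · exact (hE _ (hxy.trans (hAx y hy x mem_cons_self))).elim
  · exact (hE _ hxy).elim
  · exact hy

theorem notMem_of_infix_of_transGen (hE : DiAcyclic E) {l : List V} {m : V} (hl : l.IsChain E)
    (huw : [u, w] <:+: l) (hum : TransGen E u m) (hmw : TransGen E m w) : m ∉ l := by
  obtain ⟨X, Y, rfl⟩ := huw
  intro hm
  have hc : (X ++ u :: (w :: Y)).IsChain E := by simpa using hl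
  rcases mem_cons.1 ((hE.mem_right_iff_transGen hc).2 ⟨by simpa using hm, hum⟩) with rfl | hmY
  · exact hE _ hmw
  · have hc' : ((X ++ [u]) ++ w :: Y).IsChain E := by simpa using hl
    exact hE _ (hmw.trans ((hE.mem_right_iff_transGen hc').1 hmY).2)

end DiAcyclic

theorem DiPath.isChain (h : DiPath E s t p) : p.IsChain E := h.1

theorem DiPath.nodup (h : DiPath E s t p) : p.Nodup := h.2.1

theorem DiPath.splice_s9 (hE : DiAcyclic E) (hp : DiPath E s t (A ++ x :: B))
    (hq : DiPath E s t (C ++ x :: D)) : DiPath E s t (A ++ x :: D) := by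
  obtain ⟨hpc, -, hps, -⟩ := hp
  obtain ⟨hqc, -, -, hqt⟩ := hq
  have hc : (A ++ x :: D).IsChain E := by
    have h₁ : (A ++ [x]).IsChain E := IsChain.infix hpc ⟨[], B, by simp⟩
    have h₂ : ([x] ++ D).IsChain E := IsChain.infix hqc ⟨C, [], by simp⟩
    simpa using h₁.append_overlap h₂ (by simp)
  refine ⟨hc, hE.nodup_of_isChain_s9 hc, ?_, ?_⟩
  · rw [← hps]; simp [head?_append, head?_cons]
  · rw [← hqt]; simp [getLast?_append, getLast?_cons]

namespace List.Nodup

theorem reduceOption {l : List (Option V)} (h : l.Nodup) : l.reduceOption.Nodup :=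
  h.filterMap fun _ _ _ ha ha' => (Option.mem_def.1 ha).trans (Option.mem_def.1 ha').symm

theorem infix_pair_iff_head? (h : (A ++ x :: B).Nodup) :
    [x, y] <:+: A ++ x :: B ↔ B.head? = some y := by
  obtain ⟨hxA, hxB⟩ : x ∉ A ∧ x ∉ B := by simpa using (nodup_cons.1 (nodup_middle.1 h)).1
  constructor
  · rintro ⟨X, Y, hXY⟩
    obtain ⟨-, -, rfl⟩ := (append_cons_inj_of_notMem hxA hxB).1 (by simpa using hXY.symm)
    rfl
  · intro hB
    obtain ⟨B, rfl⟩ : ∃ B', B = y :: B' := by cases B <;> simp_all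
    exact ⟨A, B, by simp⟩

theorem infix_pair_iff_getLast? (h : (A ++ x :: B).Nodup) :
    [y, x] <:+: A ++ x :: B ↔ A.getLast? = some y := by
  obtain ⟨hxA, hxB⟩ : x ∉ A ∧ x ∉ B := by simpa using (nodup_cons.1 (nodup_middle.1 h)).1
  constructor
  · rintro ⟨X, Y, hXY⟩
    have hXY' : A ++ x :: B = (X ++ [y]) ++ x :: Y := by rw [← hXY]; simp
    obtain ⟨rfl, -, -⟩ := (append_cons_inj_of_notMem hxA hxB).1 hXY'
    simp
  · intro hA
    obtain ⟨A, rfl⟩ := getLast?_eq_some_iff.1 hA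
    exact ⟨A, B, by simp⟩

end List.Nodup

theorem List.exists_eq_append_cons_cons_of_infix {l : List V} (h : [x, y] <:+: l) :
    ∃ A B, l = A ++ x :: y :: B := by
  obtain ⟨A, B, rfl⟩ := h
  exact ⟨A, B, by simp⟩

theorem DiPath.exists_segment_between (hE : DiAcyclic E) (huw : E u w) (hq : DiPath E s t q)
    (hu : u ∈ q) (hw : w ∈ q) (hne : ¬ [u, w] <:+: q) :
    ∃ A M B, q = A ++ u :: (M ++ w :: B) ∧ M ≠ [] ∧
      ∀ m ∈ M, TransGen E u m ∧ TransGen E m w := by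
  obtain ⟨A, R, rfl⟩ := append_of_mem hu
  obtain ⟨M, B, rfl⟩ := append_of_mem ((hE.mem_right_iff_transGen hq.isChain).2 ⟨hw, .single huw⟩)
  refine ⟨A, M, B, rfl, ?_, fun m hm => ⟨?_, ?_⟩⟩
  · rintro rfl
    exact hne ⟨A, B, by simp⟩
  · exact ((hE.mem_right_iff_transGen hq.isChain).1 (by simp [hm])).2
  · have hc : ((A ++ u :: M) ++ w :: B).IsChain E := by simpa using hq.isChain
    exact ((hE.mem_left_iff_transGen hc).1 (by simp [hm])).2

section Separation

variable {S : Finset V}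

def EdgeTracking (E : V → V → Prop) (s t u w : V) (S : Finset V) : Prop :=
  ∀ p q, DiPath E s t p → DiPath E s t q → (∀ z ∈ S, z ∈ p ↔ z ∈ q) →
    ([u, w] <:+: p ↔ [u, w] <:+: q) → p = q

structure Confusable (E : V → V → Prop) (s t u w : V) (X : Finset V) (p q : List V) : Prop where
  dipath_left : DiPath E s t p
  dipath_right : DiPath E s t q
  infix_left : [u, w] <:+: p
  not_infix_right : ¬ [u, w] <:+: q
  mem_iff : ∀ z ∈ X, z ∈ p ↔ z ∈ q

theorem EdgeTracking.false_of_splice (hE : DiAcyclic E) (huw : E u w)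
    (hS : EdgeTracking E s t u w S) {p₁ q₁ p₂ q₂ : List V}
    (h₁ : Confusable E s t u w S p₁ q₁) (h₂ : Confusable E s t u w S p₂ q₂)
    (hu₁ : u ∉ q₁) (hw₁ : w ∈ q₁) (hu₂ : u ∈ q₂) (hw₂ : w ∉ q₂) : False := by
  have huS : u ∉ S := fun huS => hu₁ ((h₁.mem_iff u huS).1 (h₁.infix_left.subset (by simp)))
  have hwS : w ∉ S := fun hwS => hw₂ ((h₂.mem_iff w hwS).1 (h₂.infix_left.subset (by simp)))
  obtain ⟨A₁, B₁, rfl⟩ := exists_eq_append_cons_cons_of_infix h₁.infix_left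
  obtain ⟨A₂, B₂, rfl⟩ := exists_eq_append_cons_cons_of_infix h₂.infix_left
  obtain ⟨C₁, D₁, rfl⟩ := append_of_mem hw₁
  obtain ⟨C₂, D₂, rfl⟩ := append_of_mem hu₂
  have hp₂ : DiPath E s t ((A₂ ++ [u]) ++ w :: B₂) := by simpa using h₂.dipath_left
  -- splice `p₁` with `q₂` at `u`, and `q₁` with `p₂` at `w`
  have hn : DiPath E s t (A₁ ++ u :: D₂) := h₁.dipath_left.splice_s9 hE h₂.dipath_right
  have hj : DiPath E s t (C₁ ++ w :: B₂) := h₁.dipath_right.splice_s9 hE hp₂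
  have hn_not : ¬ [u, w] <:+: A₁ ++ u :: D₂ := by
    rw [hn.nodup.infix_pair_iff_head?, ← h₂.dipath_right.nodup.infix_pair_iff_head?]
    exact h₂.not_infix_right
  have hj_not : ¬ [u, w] <:+: C₁ ++ w :: B₂ := by
    rw [hj.nodup.infix_pair_iff_getLast?, ← h₁.dipath_right.nodup.infix_pair_iff_getLast?]
    exact h₁.not_infix_right
  have htrace : ∀ z ∈ S, z ∈ A₁ ++ u :: D₂ ↔ z ∈ C₁ ++ w :: B₂ := by
    intro z hz
    have hzu : z ≠ u := by rintro rfl; exact huS hz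
    have hzw : z ≠ w := by rintro rfl; exact hwS hz
    have hp₁ : ((A₁ ++ [u]) ++ w :: B₁).IsChain E := by simpa using h₁.dipath_left.isChain
    have hA₁ : z ∈ A₁ ↔ z ∈ A₁ ++ u :: w :: B₁ ∧ TransGen E z w := by
      simpa [hzu] using hE.mem_left_iff_transGen (y := z) hp₁
    have hC₁ := hE.mem_left_iff_transGen (y := z) h₁.dipath_right.isChain
    have hD₂ := hE.mem_right_iff_transGen (y := z) h₂.dipath_right.isChain
    have hB₂ : z ∈ B₂ ↔ z ∈ A₂ ++ u :: w :: B₂ ∧ TransGen E u z := by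
      simpa [hzw] using hE.mem_right_iff_transGen (y := z) (A := A₂) h₂.dipath_left.isChain
    simp only [mem_append, mem_cons, hzu, hzw, false_or]
    rw [hA₁, hC₁, hD₂, hB₂, h₁.mem_iff z hz, h₂.mem_iff z hz]
  have huj : u ∈ C₁ ++ w :: B₂ := hS _ _ hn hj htrace (iff_of_false hn_not hj_not) ▸ by simp
  simp only [mem_append, mem_cons] at huj
  rcases huj with huC | rfl | huB
  · exact hu₁ (by simp [huC])
  · exact hE _ (.single huw)
  · exact hE _ ((TransGen.single huw).trans ((hE.mem_right_iff_transGen hp₂.isChain).1 huB).2)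

variable [DecidableEq V]

theorem tracking_iff {T : Finset V} : Tracking E s t T ↔ ∀ p q, DiPath E s t p → DiPath E s t q →
    (∀ z ∈ T, z ∈ p ↔ z ∈ q) → p = q := by
  have (p q : List V) : p.toFinset ∩ T = q.toFinset ∩ T ↔ ∀ z ∈ T, z ∈ p ↔ z ∈ q := by
    simp only [Finset.ext_iff, Finset.mem_inter, List.mem_toFinset]
    exact forall_congr' fun z => by by_cases hz : z ∈ T <;> simp [hz]
  simp only [Tracking, this]

theorem Confusable.of_insert (h : Confusable E s t u w (insert x S) p q) :
    Confusable E s t u w S p q :=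
  { h with mem_iff := fun z hz => h.mem_iff z (Finset.mem_insert_of_mem hz) }

theorem Confusable.mem_iff_insert (h : Confusable E s t u w (insert x S) p q) : x ∈ p ↔ x ∈ q :=
  h.mem_iff x (Finset.mem_insert_self x S)

theorem EdgeTracking.tracking_insert (hS : EdgeTracking E s t u w S)
    (h : ∀ p q, ¬ Confusable E s t u w (insert x S) p q) : Tracking E s t (insert x S) := by
  refine tracking_iff.2 fun p q hp hq hpq => hS p q hp hq
    (fun z hz => hpq z (Finset.mem_insert_of_mem hz)) ?_
  by_contra hne
  by_cases hup : [u, w] <:+: p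
  · exact h p q ⟨hp, hq, hup, fun huq => hne (iff_of_true hup huq), hpq⟩
  · have huq : [u, w] <:+: q := by_contra fun huq => hne (iff_of_false hup huq)
    exact h q p ⟨hq, hp, huq, hup, fun z hz => (hpq z hz).symm⟩

theorem EdgeTracking.tracking_insert_of_between (hE : DiAcyclic E)
    (hS : EdgeTracking E s t u w S) {A M B : List V} (hq : DiPath E s t (A ++ u :: (M ++ w :: B)))
    (hne : ¬ [u, w] <:+: A ++ u :: (M ++ w :: B))
    (hM : ∀ m ∈ M, m ∉ S ∧ TransGen E u m ∧ TransGen E m w) (hx : x ∈ M) :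
    Tracking E s t (insert x S) := by
  refine hS.tracking_insert fun P Q hPQ => ?_
  have hMP : ∀ m ∈ M, m ∉ P := fun m hm =>
    hE.notMem_of_infix_of_transGen hPQ.dipath_left.isChain hPQ.infix_left (hM m hm).2.1
      (hM m hm).2.2
  obtain ⟨AP, BP, rfl⟩ := exists_eq_append_cons_cons_of_infix hPQ.infix_left
  -- reroute `P` from `u` to `w` along `q`
  have hR : DiPath E s t (AP ++ u :: (M ++ w :: BP)) := by
    have h₁ : DiPath E s t ((AP ++ u :: M) ++ w :: B) := by
      simpa using hPQ.dipath_left.splice_s9 hE hq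
    have h₂ : DiPath E s t ((AP ++ [u]) ++ w :: BP) := by simpa using hPQ.dipath_left
    simpa using h₁.splice_s9 hE h₂
  have hR_not : ¬ [u, w] <:+: AP ++ u :: (M ++ w :: BP) := by
    rw [hq.nodup.infix_pair_iff_head?] at hne
    rw [hR.nodup.infix_pair_iff_head?]
    simpa [head?_append] using hne
  have hRQ : AP ++ u :: (M ++ w :: BP) = Q := by
    refine hS _ _ hR hPQ.dipath_right (fun z hz => ?_) (iff_of_false hR_not hPQ.not_infix_right)
    have hzM : z ∉ M := fun hzM => (hM z hzM).1 hz
    rw [← hPQ.mem_iff z (Finset.mem_insert_of_mem hz)]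
    simp [hzM]
  exact hMP x hx (hPQ.mem_iff_insert.2 (hRQ ▸ by simp [hx]))

theorem Confusable.exists_tracking_insert (hE : DiAcyclic E) (huw : E u w)
    (hS : EdgeTracking E s t u w S) (h : Confusable E s t u w S p q) (hu : u ∈ q) (hw : w ∈ q) :
    ∃ x, Tracking E s t (insert x S) := by
  obtain ⟨A, M, B, rfl, hM, hMuw⟩ :=
    h.dipath_right.exists_segment_between hE huw hu hw h.not_infix_right
  obtain ⟨x, hx⟩ := exists_mem_of_ne_nil M hM
  refine ⟨x, hS.tracking_insert_of_between hE h.dipath_right h.not_infix_right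
    (fun m hm => ⟨fun hmS => ?_, hMuw m hm⟩) hx⟩
  exact hE.notMem_of_infix_of_transGen h.dipath_left.isChain h.infix_left (hMuw m hm).1
    (hMuw m hm).2
    ((h.mem_iff m hmS).2 (by simp [hm]))

theorem Confusable.tracking_insert_target (hE : DiAcyclic E) (huw : E u w)
    (hS : EdgeTracking E s t u w S)
    (hA : ∀ p q, Confusable E s t u w S p q → u ∈ q → w ∉ q)
    (h : Confusable E s t u w S p q) (hu : u ∈ q) : Tracking E s t (insert w S) := by
  refine hS.tracking_insert fun P Q hPQ => ?_
  have hwQ : w ∈ Q := hPQ.mem_iff_insert.1 (hPQ.infix_left.subset (by simp))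
  exact hS.false_of_splice hE huw hPQ.of_insert h (fun huQ => hA P Q hPQ.of_insert huQ hwQ) hwQ
    hu (hA p q h hu)

theorem EdgeTracking.exists_tracking_insert (hE : DiAcyclic E) (huw : E u w)
    (hS : EdgeTracking E s t u w S) : ∃ x, Tracking E s t (insert x S) := by
  by_cases hA : ∃ p q, Confusable E s t u w S p q ∧ u ∈ q ∧ w ∈ q
  · obtain ⟨p, q, h, hu, hw⟩ := hA
    exact h.exists_tracking_insert hE huw hS hu hw
  simp only [not_exists, not_and] at hA
  by_cases hB : ∃ p q, Confusable E s t u w S p q ∧ u ∈ q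
  · obtain ⟨p, q, h, hu⟩ := hB
    exact ⟨w, h.tracking_insert_target hE huw hS hA hu⟩
  simp only [not_exists, not_and] at hB
  exact ⟨u, hS.tracking_insert fun p q h =>
    hB p q h.of_insert (h.mem_iff_insert.1 (h.infix_left.subset (by simp)))⟩

end Separation

section Subdivision

variable [DecidableEq V]

def subdivRel (E : V → V → Prop) (u w : V) : Option V → Option V → Prop
  | some x, some y => E x y ∧ ¬(x = u ∧ y = w)
  | some x, none => x = u
  | none, some y => y = w
  | none, none => False

namespace List

def subdivide (u w : V) : List V → List (Option V)
  | [] => []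
  | a :: l => some a :: ((if a = u ∧ l.head? = some w then [none] else []) ++ subdivide u w l)

@[simp]
theorem reduceOption_subdivide (l : List V) : (l.subdivide u w).reduceOption = l := by
  induction l with
  | nil => rfl
  | cons a l ih =>
    rw [subdivide]
    split_ifs <;> simp [reduceOption_cons_of_some, reduceOption_cons_of_none, ih]

@[simp]
theorem some_mem_subdivide {l : List V} : some x ∈ l.subdivide u w ↔ x ∈ l := by
  rw [← reduceOption_mem_iff, reduceOption_subdivide]

@[simp]
theorem none_mem_subdivide {l : List V} : none ∈ l.subdivide u w ↔ [u, w] <:+: l := by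
  induction l with
  | nil => simp [subdivide]
  | cons a l ih =>
    rw [subdivide, infix_cons_iff, ← ih]
    rcases eq_or_ne a u with rfl | ha <;> cases l <;> simp [*, Ne.symm, subdivide, eq_comm (a := w)]

theorem head?_subdivide (l : List V) : (l.subdivide u w).head? = l.head?.map some := by
  cases l <;> simp [subdivide]

theorem getLast?_subdivide (l : List V) : (l.subdivide u w).getLast? = l.getLast?.map some := by
  induction l with
  | nil => rfl
  | cons a l ih =>
    cases l with
    | nil => simp [subdivide]
    | cons b l =>
      rw [subdivide, ← singleton_append, getLast?_append, getLast?_append, ih]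
      simp [getLast?_cons]

theorem IsChain.subdivide {l : List V} (hl : l.IsChain E) :
    (l.subdivide u w).IsChain (subdivRel E u w) := by
  induction l with
  | nil => simp [List.subdivide]
  | cons a l ih =>
    cases l with
    | nil => simp [List.subdivide]
    | cons b l =>
      rw [isChain_cons_cons] at hl
      rw [List.subdivide]
      split_ifs <;> simp only [cons_append, nil_append, isChain_cons_cons] <;>
        rw [List.isChain_cons, head?_subdivide] <;> simp_all [subdivRel]

theorem Nodup.subdivide {l : List V} (hl : l.Nodup) : (l.subdivide u w).Nodup := by
  induction l with
  | nil => simp [List.subdivide]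
  | cons a l ih =>
    rw [nodup_cons] at hl
    rw [List.subdivide]
    split_ifs with h
    · have : ¬ [u, w] <:+: l := fun hi => hl.1 (h.1 ▸ hi.subset (by simp))
      simp [hl.1, ih hl.2, this]
    · simp [hl.1, ih hl.2]

theorem subdivide_reduceOption_of_isChain (huw : E u w) : ∀ (a : V) (l : List (Option V)),
    (some a :: l).IsChain (subdivRel E u w) → (some a :: l).getLast? ≠ some none →
      (a :: l.reduceOption).subdivide u w = some a :: l ∧ (a :: l.reduceOption).IsChain E
  | a, [], _, _ => by simp [subdivide]
  | a, some b :: l, hc, hl => by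
    simp only [isChain_cons_cons, subdivRel] at hc
    obtain ⟨ih₁, ih₂⟩ := subdivide_reduceOption_of_isChain huw b l hc.2 (by simpa using hl)
    simp [reduceOption_cons_of_some, subdivide, hc.1, ih₁, ih₂]
  | _, [none], _, hl => absurd hl (by simp)
  | _, none :: none :: _, hc, _ => by simp [subdivRel] at hc
  | a, none :: some b :: l, hc, hl => by
    simp only [isChain_cons_cons, subdivRel] at hc
    obtain ⟨ih₁, ih₂⟩ := subdivide_reduceOption_of_isChain huw b l hc.2.2 (by simpa using hl)
    obtain ⟨rfl, rfl, -⟩ := hc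
    simp [reduceOption_cons_of_some, reduceOption_cons_of_none, subdivide, huw, ih₁, ih₂]

end List

variable {T : Finset (Option V)}

theorem DiPath.subdivide (hp : DiPath E s t p) :
    DiPath (subdivRel E u w) (some s) (some t) (p.subdivide u w) :=
  ⟨hp.isChain.subdivide, hp.nodup.subdivide, by rw [head?_subdivide, hp.2.2.1]; rfl,
    by rw [getLast?_subdivide, hp.2.2.2]; rfl⟩

theorem DiPath.reduceOption (huw : E u w) {p : List (Option V)}
    (hp : DiPath (subdivRel E u w) (some s) (some t) p) :
    DiPath E s t p.reduceOption ∧ p.reduceOption.subdivide u w = p := by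
  obtain ⟨hc, hn, hs, ht⟩ := hp
  obtain ⟨l, rfl⟩ : ∃ l, p = some s :: l := by cases p <;> simp_all
  have hn' := hn.reduceOption
  rw [reduceOption_cons_of_some] at hn' ⊢
  obtain ⟨h₁, h₂⟩ := subdivide_reduceOption_of_isChain huw s l hc (by simp [ht])
  refine ⟨⟨h₂, hn', rfl, ?_⟩, h₁⟩
  have hlast := getLast?_subdivide (u := u) (w := w) (s :: l.reduceOption)
  rw [h₁, ht] at hlast
  exact Option.map_injective (Option.some_injective V) hlast.symm

theorem Tracking.image_some (huw : E u w) {T : Finset V} (hT : Tracking E s t T) :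
    Tracking (subdivRel E u w) (some s) (some t) (T.image some) := by
  refine tracking_iff.2 fun p q hp hq hpq => ?_
  obtain ⟨hp', hp_eq⟩ := hp.reduceOption huw
  obtain ⟨hq', hq_eq⟩ := hq.reduceOption huw
  rw [← hp_eq, ← hq_eq, tracking_iff.1 hT _ _ hp' hq' fun z hz => ?_]
  simpa [reduceOption_mem_iff] using hpq (some z) (Finset.mem_image_of_mem some hz)

theorem Tracking.eq_of_subdivRel (hT : Tracking (subdivRel E u w) (some s) (some t) T)
    (hp : DiPath E s t p) (hq : DiPath E s t q) (hpq : ∀ z ∈ T.eraseNone, z ∈ p ↔ z ∈ q)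
    (huse : none ∈ T → ([u, w] <:+: p ↔ [u, w] <:+: q)) : p = q := by
  have := tracking_iff.1 hT _ _ hp.subdivide hq.subdivide fun z hz => ?_
  · simpa using congrArg List.reduceOption this
  · cases z with
    | none => simpa using huse hz
    | some z => simpa using hpq z (Finset.mem_eraseNone.2 hz)

theorem Tracking.exists_tracking_of_subdivRel (hE : DiAcyclic E) (huw : E u w)
    (hT : Tracking (subdivRel E u w) (some s) (some t) T) :
    ∃ T₀ : Finset V, T₀.card ≤ T.card ∧ Tracking E s t T₀ := by
  by_cases hnone : none ∈ T
  · obtain ⟨x, hx⟩ := EdgeTracking.exists_tracking_insert hE huw (S := T.eraseNone)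
      fun p q hp hq hpq huse => hT.eq_of_subdivRel hp hq hpq fun _ => huse
    refine ⟨_, ?_, hx⟩
    calc (insert x T.eraseNone).card ≤ T.eraseNone.card + 1 := Finset.card_insert_le _ _
      _ = T.card := by
        rw [← Finset.card_insertNone, Finset.insertNone_eraseNone, Finset.insert_eq_of_mem hnone]
  · exact ⟨T.eraseNone, Finset.card_eraseNone_le T, tracking_iff.2 fun p q hp hq hpq =>
      hT.eq_of_subdivRel hp hq hpq fun h => absurd h hnone⟩

end Subdivision

end

/-- The subdivided graph lives on `Option V`, with `none` the new vertex `v`. -/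
theorem subdivide_edge_tracking_iff_general {V : Type*} [DecidableEq V]
    (E : V → V → Prop) (s t u w : V)
    (hacyc : DiAcyclic E)
    (huw : E u w)
    (E' : Option V → Option V → Prop)
    (hE' : ∀ a b : Option V, E' a b ↔
      ((∃ x y : V, a = some x ∧ b = some y ∧ E x y ∧ ¬ (x = u ∧ y = w)) ∨
        (a = some u ∧ b = none) ∨ (a = none ∧ b = some w)))
    (k : ℕ) :
    (∃ T : Finset V, T.card ≤ k ∧ Tracking E s t T) ↔
      (∃ T' : Finset (Option V), T'.card ≤ k ∧ Tracking E' (some s) (some t) T') := by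
  obtain rfl : E' = subdivRel E u w := by
    ext a b
    rw [hE']
    cases a <;> cases b <;> simp [subdivRel]
  exact ⟨fun ⟨T, hT, hTr⟩ => ⟨T.image some, Finset.card_image_le.trans hT, hTr.image_some huw⟩,
    fun ⟨T, hT, hTr⟩ => (hTr.exists_tracking_of_subdivRel hacyc huw).imp
      fun _ h => ⟨h.1.trans hT, h.2⟩⟩

/-- subdividing an edge `(u,w)` of a DAG without parallel edges preserves
the existence of a tracking set of size at most `k`. The subdivided graph lives on
`Option V`, where `none` is the new vertex `v`. -/
theorem subdivide_edge_tracking_iff {V : Type*} [Fintype V] [DecidableEq V]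
    (E : V → V → Prop) (s t u w : V)
    (hacyc : DiAcyclic E)
    (huw : E u w)
    (E' : Option V → Option V → Prop)
    (hE' : ∀ a b : Option V, E' a b ↔
      ((∃ x y : V, a = some x ∧ b = some y ∧ E x y ∧ ¬ (x = u ∧ y = w)) ∨
        (a = some u ∧ b = none) ∨ (a = none ∧ b = some w)))
    (k : ℕ) :
    (∃ T : Finset V, T.card ≤ k ∧ Tracking E s t T) ↔
      (∃ T' : Finset (Option V), T'.card ≤ k ∧ Tracking E' (some s) (some t) T') :=
  subdivide_edge_tracking_iff_general E s t u w hacyc huw E' hE' k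
end

section
/- Let G be a finite directed acyclic graph with source s and sink t such that every edge lies on some directed s-t path, and suppose there are two distinct vertices x, y each of total degree 2 and both with edges from u and to v, i.e., (u,x),(u,y),(x,v),(y,v) ∈ E(G). Then every tracking set for G must contain x or y. -/
namespace List

variable {α : Type*}

theorem Nodup.eq_of_append_cons_eq {l₁ l₂ r₁ r₂ : List α} {c : α}
    (h : (l₁ ++ c :: r₁).Nodup) (he : l₁ ++ c :: r₁ = l₂ ++ c :: r₂) : l₁ = l₂ := by
  classical
  have hc₁ : c ∉ l₁ := fun hc => (nodup_append.1 h).2.2 _ hc _ mem_cons_self rfl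
  have hc₂ : c ∉ l₂ := fun hc => (nodup_append.1 (he ▸ h)).2.2 _ hc _ mem_cons_self rfl
  have hlen : l₁.length = l₂.length := by
    simpa [idxOf_append_of_notMem hc₁, idxOf_append_of_notMem hc₂] using
      congrArg (idxOf c) he
  exact (append_inj he hlen).1

theorem Nodup.eq_of_infix_pair {l : List α} {a b c : α} (h : l.Nodup)
    (ha : [a, c] <:+: l) (hb : [b, c] <:+: l) : a = b := by
  obtain ⟨A, B, rfl⟩ := ha
  obtain ⟨C, D, hCD⟩ := hb
  have hsplit := Nodup.eq_of_append_cons_eq (l₁ := A ++ [a]) (l₂ := C ++ [b]) (by simpa using h)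
    (by simpa using hCD.symm)
  exact (append_singleton_inj.1 hsplit).2

theorem Nodup.ne_of_infix_pair_of_getLast? {l : List α} {a b t : α} (h : l.Nodup)
    (hlast : l.getLast? = some t) (hab : [a, b] <:+: l) : a ≠ t := by
  rintro rfl
  obtain ⟨A, B, rfl⟩ := hab
  have hA : A ++ [a, b] ++ B = A ++ a :: (b :: B) := by simp
  rw [hA] at h hlast
  rw [getLast?_append_cons] at hlast
  have ha : a ∉ A ++ b :: B := (nodup_cons.1 (perm_middle.nodup_iff.1 h)).1
  exact ha (mem_append_right _ (mem_of_getLast? hlast))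

theorem exists_infix_pair_of_mem {l : List α} {b : α} (hb : b ∈ l)
    (hlast : l.getLast? ≠ some b) : ∃ c, [b, c] <:+: l := by
  obtain ⟨A, B, rfl⟩ := append_of_mem hb
  rcases B with _ | ⟨c, B⟩
  · simp at hlast
  · exact ⟨c, A, B, by simp⟩

theorem exists_infix_triple_of_infix_pair {l : List α} {a b : α} (hab : [a, b] <:+: l)
    (hlast : l.getLast? ≠ some b) : ∃ c, [a, b, c] <:+: l := by
  obtain ⟨A, B, rfl⟩ := hab
  rcases B with _ | ⟨c, B⟩
  · simp at hlast
  · exact ⟨c, A, B, by simp⟩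

theorem Nodup.append_cons_of_notMem {l₁ l₂ : List α} {x y : α} (h : (l₁ ++ x :: l₂).Nodup)
    (hy : y ∉ l₁ ++ l₂) : (l₁ ++ y :: l₂).Nodup :=
  perm_middle.nodup_iff.2 (nodup_cons.2 ⟨hy, (nodup_cons.1 (perm_middle.nodup_iff.1 h)).2⟩)

theorem toFinset_append_cons_inter_eq [DecidableEq α] (l₁ l₂ : List α) {x y : α}
    {T : Finset α} (hx : x ∉ T) (hy : y ∉ T) :
    (l₁ ++ x :: l₂).toFinset ∩ T = (l₁ ++ y :: l₂).toFinset ∩ T := by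
  ext a
  by_cases hax : a = x
  · subst hax; simp [hx]
  by_cases hay : a = y
  · subst hay; simp [hy]
  simp [hax, hay]

end List

section Digraph

variable {V : Type*} {E : V → V → Prop} {s t : V}

def EveryEdgeOnPath (E : V → V → Prop) (s t : V) : Prop :=
  ∀ a b : V, E a b → ∃ p : List V, DiPath E s t p ∧ [a, b] <:+: p

theorem EveryEdgeOnPath.ne_of_adj (h : EveryEdgeOnPath E s t) {a b : V} (hab : E a b) :
    a ≠ t := by
  obtain ⟨p, ⟨_, hnd, _, hlast⟩, hp⟩ := h a b hab
  exact hnd.ne_of_infix_pair_of_getLast? hlast hp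

theorem eq_of_adj_of_indeg_add_outdeg_eq_two [Fintype V] [DecidableRel E] {u x v w : V}
    (hdeg : indeg E x + outdeg E x = 2) (hux : E u x) (hxv : E x v) (hxw : E x w) : w = v := by
  have hin : 0 < indeg E x := Finset.card_pos.2 ⟨u, by simpa using hux⟩
  have hout : outdeg E x ≤ 1 := by omega
  exact Finset.card_le_one.1 hout w (by simpa using hxw) v (by simpa using hxv)

namespace DiPath

variable {p : List V} {x v : V}

theorem infix_pair_of_mem (hp : DiPath E s t p) (hx : x ∈ p) (hxt : x ≠ t)
    (hsucc : ∀ w, E x w → w = v) : [x, v] <:+: p := by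
  obtain ⟨c, hc⟩ := p.exists_infix_pair_of_mem hx (by rw [hp.2.2.2]; simpa using hxt.symm)
  have hxc : E x c := by simpa using hp.1.infix hc
  rwa [hsucc c hxc] at hc

theorem infix_triple_of_infix_pair (hp : DiPath E s t p) {u : V} (hux : [u, x] <:+: p)
    (hxt : x ≠ t) (hsucc : ∀ w, E x w → w = v) : [u, x, v] <:+: p := by
  obtain ⟨c, hc⟩ := List.exists_infix_triple_of_infix_pair hux
    (by rw [hp.2.2.2]; simpa using hxt.symm)
  have hxc : E x c := (by simpa using hp.1.infix hc : E u x ∧ E x c).2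
  rwa [hsucc c hxc] at hc

theorem swap_middle {A B : List V} {u y : V} (hp : DiPath E s t (A ++ u :: x :: v :: B))
    (huy : E u y) (hyv : E y v) (hy : y ∉ A ++ u :: v :: B) :
    DiPath E s t (A ++ u :: y :: v :: B) := by
  obtain ⟨hch, hnd, hhead, hlast⟩ := hp
  refine ⟨?_, ?_, ?_, ?_⟩
  · change List.IsChain E _ at hch ⊢
    simp only [List.isChain_append_cons_cons, List.isChain_cons_cons] at hch ⊢
    exact ⟨hch.1, huy, hyv, hch.2.2.2⟩
  · have e : ∀ z, A ++ u :: z :: v :: B = (A ++ [u]) ++ z :: v :: B := by simp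
    rw [e] at hnd ⊢
    exact hnd.append_cons_of_notMem (by simpa using hy)
  · simpa using hhead
  · simpa using hlast

end DiPath

end Digraph

theorem tracker_forced_by_parallel_paths_general {V : Type*} [Fintype V] [DecidableEq V]
    (E : V → V → Prop) [DecidableRel E] (s t : V)
    (hedge : ∀ a b : V, E a b → ∃ p : List V, DiPath E s t p ∧ [a, b] <:+: p)
    (u v x y : V) (hxy : x ≠ y)
    (hux : E u x) (huy : E u y) (hxv : E x v) (hyv : E y v)
    (hdegx : indeg E x + outdeg E x = 2) (hdegy : indeg E y + outdeg E y = 2) :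
    ∀ T : Finset V, Tracking E s t T → x ∈ T ∨ y ∈ T := by
  intro T hT
  by_contra! hxyT
  have hsuccx : ∀ w, E x w → w = v := fun _ => eq_of_adj_of_indeg_add_outdeg_eq_two hdegx hux hxv
  have hsuccy : ∀ w, E y w → w = v := fun _ => eq_of_adj_of_indeg_add_outdeg_eq_two hdegy huy hyv
  obtain ⟨p, hp, hpux⟩ := hedge u x hux
  have hpxv := hp.infix_triple_of_infix_pair hpux (EveryEdgeOnPath.ne_of_adj hedge hxv) hsuccx
  have hyp : y ∉ p := fun hy =>
    hxy (hp.2.1.eq_of_infix_pair (List.IsInfix.trans ⟨[u], [], rfl⟩ hpxv)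
      (hp.infix_pair_of_mem hy (EveryEdgeOnPath.ne_of_adj hedge hyv) hsuccy))
  obtain ⟨A, B, rfl⟩ := hpxv
  have hp' : DiPath E s t (A ++ u :: x :: v :: B) := by simpa using hp
  have hq := hp'.swap_middle huy hyv (by simp at hyp ⊢; tauto)
  have hinter := List.toFinset_append_cons_inter_eq (A ++ [u]) (v :: B) hxyT.1 hxyT.2
  simp only [← List.append_cons] at hinter
  have hpq := hT _ _ hp' hq hinter
  exact hxy (by simpa using hpq)

/-- if distinct vertices `x`, `y` both have total degree 2 and edges from
`u` and to `v`, then every tracking set contains `x` or `y`. -/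
theorem tracker_forced_by_parallel_paths {V : Type*} [Fintype V] [DecidableEq V]
    (E : V → V → Prop) [DecidableRel E] (s t : V)
    (hacyc : DiAcyclic E)
    (hedge : ∀ a b : V, E a b → ∃ p : List V, DiPath E s t p ∧ [a, b] <:+: p)
    (u v x y : V) (hxy : x ≠ y)
    (hux : E u x) (huy : E u y) (hxv : E x v) (hyv : E y v)
    (hdegx : indeg E x + outdeg E x = 2) (hdegy : indeg E y + outdeg E y = 2) :
    ∀ T : Finset V, Tracking E s t T → x ∈ T ∨ y ∈ T :=
  tracker_forced_by_parallel_paths_general E s t hedge u v x y hxy hux huy hxv hyv hdegx hdegy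
end

section
/- Let G be a finite directed acyclic graph with source s and sink t in which every vertex lies on some directed s-t path, and let T ⊆ V(G) be a tracking set. Then the number of vertices with out-degree at least 2 is at most (|T| + 1)². -/
/-! Fix a default out-neighbour `g v` of every vertex `v ≠ t`. For a vertex `z` of out-degree at
least 2 pick an out-neighbour `y ≠ g z`, go back from `z` along an `s`-`z` walk to the last vertex
`x ∈ T ∪ {s}`, and go forward from `y` along `g` until the first vertex `b ∈ T ∪ {t}`. The
resulting `x`-`b` walk meets `T` only in its ends, so extending it by fixed `s`-`x` and `b`-`t`
walks, the tracking property shows that it is determined by `(x, b)`; and `z` is the last vertex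
at which it does not follow `g`. Hence `z ↦ (x, b)` is injective into `(T ∪ {s}) × (T ∪ {t})`. -/

namespace List

variable {α : Type*} {R : α → α → Prop}

theorem eq_nil_of_isChain_append {A m G : List α} {z y : α}
    (hG : (m ++ G).IsChain R) (hz : (A ++ m).getLast? = some z) (hy : G.head? = some y)
    (hR : ¬ R z y) : m = [] := by
  by_contra hm
  rw [getLast?_append_of_ne_nil _ hm] at hz
  exact hR ((isChain_append.1 hG).2.2 z hz y hy)

theorem eq_of_append_eq_append_of_isChain {A₁ A₂ G₁ G₂ : List α} {z₁ z₂ y₁ y₂ : α}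
    (h : A₁ ++ G₁ = A₂ ++ G₂) (hz₁ : A₁.getLast? = some z₁) (hz₂ : A₂.getLast? = some z₂)
    (hG₁ : G₁.IsChain R) (hG₂ : G₂.IsChain R) (hy₁ : G₁.head? = some y₁)
    (hy₂ : G₂.head? = some y₂) (hR₁ : ¬ R z₁ y₁) (hR₂ : ¬ R z₂ y₂) : z₁ = z₂ := by
  rcases append_eq_append_iff.1 h with ⟨m, rfl, rfl⟩ | ⟨m, rfl, rfl⟩
  · obtain rfl := eq_nil_of_isChain_append hG₁ hz₂ hy₂ hR₂
    simp_all
  · obtain rfl := eq_nil_of_isChain_append hG₂ hz₁ hy₁ hR₁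
    simp_all

end List

section Walks

variable {V : Type*} {E : V → V → Prop}

def IsWalk (E : V → V → Prop) (a b : V) (p : List V) : Prop :=
  p.IsChain E ∧ p.head? = some a ∧ p.getLast? = some b

namespace IsWalk

variable {a b c v : V} {p q : List V}

theorem ne_nil (h : IsWalk E a b p) : p ≠ [] := by
  rintro rfl
  simp [IsWalk] at h

theorem eq_cons (h : IsWalk E a b p) : p = a :: p.tail := by
  rcases p with _ | ⟨c, p⟩
  · exact absurd rfl h.ne_nil
  · simpa using h.2.1

theorem head_mem (h : IsWalk E a b p) : a ∈ p := by
  rw [h.eq_cons]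
  exact List.mem_cons_self

theorem singleton (a : V) : IsWalk E a a [a] :=
  ⟨.singleton a, rfl, rfl⟩

theorem cons (hab : E a b) (h : IsWalk E b c p) : IsWalk E a c (a :: p) := by
  refine ⟨h.1.cons fun y hy => ?_, rfl, ?_⟩
  · rw [h.2.1, Option.mem_some_iff] at hy
    exact hy ▸ hab
  · rw [List.getLast?_cons, h.2.2, Option.getD_some]

theorem append (hp : IsWalk E a b p) (hq : IsWalk E b c q) : IsWalk E a c (p ++ q.tail) := by
  have hq' := hq
  rw [hq.eq_cons] at hq'
  obtain ⟨hqc, -, hql⟩ := hq'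
  refine ⟨hp.1.append hqc.tail fun x hx y hy => ?_, ?_, ?_⟩
  · rw [hp.2.2, Option.mem_some_iff] at hx
    exact hx ▸ List.isChain_cons.1 hqc |>.1 y hy
  · rw [List.head?_append_of_ne_nil _ hp.ne_nil, hp.2.1]
  · rw [List.getLast?_cons] at hql
    rw [List.getLast?_append, hp.2.2]
    cases h : q.tail.getLast? <;> simp_all

theorem mem_append_tail (hp : IsWalk E a b p) (hq : IsWalk E b c q) :
    v ∈ p ++ q.tail ↔ v ∈ p ∨ v ∈ q := by
  rw [List.mem_append, hq.eq_cons, List.tail_cons, List.mem_cons]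
  have hb : b ∈ p := List.mem_of_getLast? hp.2.2
  constructor
  · rintro (h | h) <;> simp [h]
  · rintro (h | rfl | h) <;> simp_all

theorem split (h : IsWalk E a b p) (hv : v ∈ p) :
    (∃ p₁, IsWalk E a v p₁) ∧ ∃ p₂, IsWalk E v b p₂ := by
  obtain ⟨l₁, l₂, rfl⟩ := List.append_of_mem hv
  obtain ⟨hc, hh, hl⟩ := h
  have hc₂ := (List.isChain_append.1 hc).2.1
  rw [← List.singleton_append, ← List.append_assoc] at hc hh
  refine ⟨⟨l₁ ++ [v], (List.isChain_append.1 hc).1, ?_, by simp⟩, ⟨v :: l₂, hc₂, rfl, ?_⟩⟩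
  · rwa [List.head?_append_of_ne_nil _ (by simp)] at hh
  · rwa [List.getLast?_append_of_ne_nil _ (by simp)] at hl

theorem exists_rel (h : IsWalk E a b p) (hab : a ≠ b) : ∃ w, E a w := by
  obtain ⟨hc, hh, hl⟩ := h
  rcases p with _ | ⟨c, _ | ⟨w, r⟩⟩
  · simp at hh
  · simp_all
  · simp only [List.head?_cons, Option.some.injEq] at hh
    exact ⟨w, hh ▸ (List.isChain_cons_cons.1 hc).1⟩

theorem exists_last_mem (S : Set V) (h : IsWalk E a b p) :
    ∃ x A, IsWalk E x b A ∧ (x = a ∨ x ∈ S) ∧ ∀ u ∈ A.tail, u ∉ S := by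
  induction p generalizing a with
  | nil => exact absurd rfl h.ne_nil
  | cons c l ih =>
    obtain rfl : c = a := by simpa using h.2.1
    rcases l with _ | ⟨d, r⟩
    · exact ⟨c, [c], h, Or.inl rfl, by simp⟩
    · have hcd : E c d := (List.isChain_cons_cons.1 h.1).1
      obtain ⟨x, A, hA, rfl | hx, hAS⟩ := ih ⟨h.1.tail, rfl, by simpa using h.2.2⟩
      · by_cases hxS : x ∈ S
        · exact ⟨x, A, hA, Or.inr hxS, hAS⟩
        · refine ⟨c, c :: A, hA.cons hcd, Or.inl rfl, fun u hu => ?_⟩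
          rw [List.tail_cons, hA.eq_cons, List.mem_cons] at hu
          rcases hu with rfl | hu
          exacts [hxS, hAS u hu]
      · exact ⟨x, A, hA, Or.inr hx, hAS⟩

end IsWalk

theorem DiPath.isWalk {s t : V} {p : List V} (h : DiPath E s t p) : IsWalk E s t p :=
  ⟨h.1, h.2.2⟩

theorem DiAcyclic.nodup (h : DiAcyclic E) {p : List V} (hp : p.IsChain E) : p.Nodup := by
  have : IsTrans V (Relation.TransGen E) := ⟨fun _ _ _ => Relation.TransGen.trans⟩
  refine (List.isChain_iff_pairwise.1 (hp.imp fun _ _ => Relation.TransGen.single)).imp ?_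
  rintro a b hab rfl
  exact h a hab

theorem DiAcyclic.diPath (h : DiAcyclic E) {s t : V} {p : List V} (hp : IsWalk E s t p) :
    DiPath E s t p :=
  ⟨hp.1, h.nodup hp.1, hp.2⟩

theorem DiAcyclic.wellFounded_flip [Finite V] (h : DiAcyclic E) : WellFounded (flip E) := by
  have : IsTrans V (flip (Relation.TransGen E)) := ⟨fun _ _ _ h₁ h₂ => h₂.trans h₁⟩
  have : Std.Irrefl (flip (Relation.TransGen E)) := ⟨h⟩
  exact Subrelation.wf (r := flip (Relation.TransGen E)) (fun h => .single h)
    (Finite.wellFounded_of_trans_of_irrefl _)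

theorem exists_greedy_isWalk (hwf : WellFounded (flip E)) {S : Set V} {g : V → V}
    (hg : ∀ v ∉ S, E v (g v)) (v : V) :
    ∃ b ∈ S, ∃ G, IsWalk E v b G ∧ G.IsChain (fun u w => w = g u) ∧ ∀ u ∈ G, u ∈ S → u = b := by
  induction v using hwf.induction with
  | _ v ih =>
  by_cases hv : v ∈ S
  · exact ⟨v, hv, [v], .singleton v, .singleton v, by simp⟩
  · obtain ⟨b, hb, G, hG, hGg, hGS⟩ := ih (g v) (hg v hv)
    refine ⟨b, hb, v :: G, hG.cons (hg v hv), hGg.cons fun w hw => ?_, fun u hu huS => ?_⟩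
    · rw [hG.2.1, Option.mem_some_iff] at hw
      exact hw.symm
    · rcases List.mem_cons.1 hu with rfl | hu
      exacts [absurd huS hv, hGS u hu huS]

theorem exists_rel_ne_of_two_le_outdeg [Fintype V] [DecidableRel E] {z : V}
    (hz : 2 ≤ outdeg E z) (w : V) : ∃ y, E z y ∧ y ≠ w := by
  obtain ⟨y, hy, hyw⟩ := Finset.exists_mem_ne hz w
  exact ⟨y, (Finset.mem_filter.1 hy).2, hyw⟩

end Walks

section Tracking

variable {V : Type*} [DecidableEq V] {E : V → V → Prop} {s t x b : V} {T : Finset V}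

theorem Tracking.eq_of_isWalk (hT : Tracking E s t T) (hacyc : DiAcyclic E) {pre suf : List V}
    (hpre : IsWalk E s x pre) (hsuf : IsWalk E b t suf) {D₁ D₂ : List V}
    (hD₁ : IsWalk E x b D₁) (hD₂ : IsWalk E x b D₂)
    (hT₁ : ∀ u ∈ D₁, u ∈ T → u = x ∨ u = b) (hT₂ : ∀ u ∈ D₂, u ∈ T → u = x ∨ u = b) :
    D₁ = D₂ := by
  have hspliced : ∀ D, IsWalk E x b D → (∀ u ∈ D, u ∈ T → u = x ∨ u = b) →
      DiPath E s t (pre ++ D.tail ++ suf.tail) ∧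
        (pre ++ D.tail ++ suf.tail).toFinset ∩ T = (pre.toFinset ∪ suf.toFinset) ∩ T := by
    intro D hD hDT
    refine ⟨hacyc.diPath ((hpre.append hD).append hsuf), Finset.ext fun u => ?_⟩
    simp only [Finset.mem_inter, Finset.mem_union, List.mem_toFinset,
      (hpre.append hD).mem_append_tail hsuf, hpre.mem_append_tail hD]
    constructor
    · rintro ⟨(hu | hu) | hu, huT⟩
      · exact ⟨Or.inl hu, huT⟩
      · rcases hDT u hu huT with rfl | rfl
        exacts [⟨Or.inl (List.mem_of_getLast? hpre.2.2), huT⟩, ⟨Or.inr hsuf.head_mem, huT⟩]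
      · exact ⟨Or.inr hu, huT⟩
    · rintro ⟨hu | hu, huT⟩
      exacts [⟨Or.inl (Or.inl hu), huT⟩, ⟨Or.inr hu, huT⟩]
  obtain ⟨hQ₁, hQT₁⟩ := hspliced D₁ hD₁ hT₁
  obtain ⟨hQ₂, hQT₂⟩ := hspliced D₂ hD₂ hT₂
  have htail := List.append_cancel_left <|
    List.append_cancel_right (hT _ _ hQ₁ hQ₂ (hQT₁.trans hQT₂.symm))
  rw [hD₁.eq_cons, hD₂.eq_cons, htail]

def DeviatesAt (E : V → V → Prop) (T : Finset V) (g : V → V) (x b z : V) : Prop :=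
  ∃ A G : List V, ∃ y, IsWalk E x z A ∧ E z y ∧ y ≠ g z ∧ IsWalk E y b G ∧
    G.IsChain (fun u w => w = g u) ∧ ∀ u ∈ A ++ G, u ∈ T → u = x ∨ u = b

theorem DeviatesAt.eq (hT : Tracking E s t T) (hacyc : DiAcyclic E) {g : V → V} {z₁ z₂ : V}
    (hx : ∃ p, IsWalk E s x p) (hb : ∃ q, IsWalk E b t q)
    (h₁ : DeviatesAt E T g x b z₁) (h₂ : DeviatesAt E T g x b z₂) : z₁ = z₂ := by
  obtain ⟨pre, hpre⟩ := hx
  obtain ⟨suf, hsuf⟩ := hb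
  obtain ⟨A₁, G₁, y₁, hA₁, hzy₁, hyg₁, hG₁, hGg₁, hT₁⟩ := h₁
  obtain ⟨A₂, G₂, y₂, hA₂, hzy₂, hyg₂, hG₂, hGg₂, hT₂⟩ := h₂
  have hD : A₁ ++ G₁ = A₂ ++ G₂ := hT.eq_of_isWalk hacyc hpre hsuf
    (hA₁.append (hG₁.cons hzy₁)) (hA₂.append (hG₂.cons hzy₂)) hT₁ hT₂
  exact List.eq_of_append_eq_append_of_isChain hD hA₁.2.2 hA₂.2.2 hGg₁ hGg₂ hG₁.2.1 hG₂.2.1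
    hyg₁ hyg₂

theorem exists_deviatesAt [Fintype V] [DecidableRel E] (hwf : WellFounded (flip E))
    {g : V → V} (hg : ∀ v ≠ t, E v (g v)) {z : V} (hz : 2 ≤ outdeg E z)
    (hsz : ∃ p, IsWalk E s z p) : ∃ x ∈ insert s T, ∃ b ∈ insert t T, DeviatesAt E T g x b z := by
  obtain ⟨y, hzy, hyg⟩ := exists_rel_ne_of_two_le_outdeg hz (g z)
  obtain ⟨p, hp⟩ := hsz
  obtain ⟨x, A, hA, hx, hAT⟩ := hp.exists_last_mem T
  obtain ⟨b, hb, G, hG, hGg, hGT⟩ := exists_greedy_isWalk hwf (S := ↑(insert t T))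
    (fun v hv => hg v fun h => hv (h ▸ Finset.mem_insert_self t T)) y
  refine ⟨x, ?_, b, hb, A, G, y, hA, hzy, hyg, hG, hGg, fun u hu huT => ?_⟩
  · rcases hx with rfl | hx
    exacts [Finset.mem_insert_self _ _, Finset.mem_insert_of_mem hx]
  · rcases List.mem_append.1 hu with hu | hu
    · rw [hA.eq_cons, List.mem_cons] at hu
      exact Or.inl (hu.resolve_right fun h => hAT u h huT)
    · exact Or.inr (hGT u hu (Finset.mem_insert_of_mem huT))

end Tracking

theorem card_outdeg_ge_two_le_general {V : Type*} [Fintype V] [DecidableEq V]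
    (E : V → V → Prop) [DecidableRel E] (s t : V)
    (hacyc : DiAcyclic E)
    (hvert : ∀ v : V, ∃ p : List V, DiPath E s t p ∧ v ∈ p)
    (T : Finset V) (hT : Tracking E s t T) :
    (Finset.univ.filter fun z : V => 2 ≤ outdeg E z).card ≤ (T.card + 1) ^ 2 := by
  have hwalk (v : V) : (∃ p, IsWalk E s v p) ∧ ∃ q, IsWalk E v t q := by
    obtain ⟨P, hP, hv⟩ := hvert v
    exact hP.isWalk.split hv
  obtain ⟨g, hg⟩ : ∃ g : V → V, ∀ v ≠ t, E v (g v) := by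
    choose! g hg using fun v (hv : v ≠ t) => (hwalk v).2.elim fun _ hq => hq.exists_rel hv
    exact ⟨g, hg⟩
  choose! x hx b hb hdev using fun z (hz : z ∈ Finset.univ.filter fun z => 2 ≤ outdeg E z) =>
    exists_deviatesAt (T := T) hacyc.wellFounded_flip hg (Finset.mem_filter.1 hz).2 (hwalk z).1
  calc _ ≤ (insert s T ×ˢ insert t T).card := by
        refine Finset.card_le_card_of_injOn (fun z => (x z, b z))
          (fun z hz => Finset.mem_product.2 ⟨hx z hz, hb z hz⟩) fun z₁ hz₁ z₂ hz₂ h => ?_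
        obtain ⟨hxz, hbz⟩ := Prod.mk.inj h
        have h₂ := hdev z₂ hz₂
        rw [← hxz, ← hbz] at h₂
        exact DeviatesAt.eq hT hacyc (hwalk _).1 (hwalk _).2 (hdev z₁ hz₁) h₂
    _ ≤ (T.card + 1) ^ 2 := by
        rw [Finset.card_product, sq]
        gcongr <;> exact Finset.card_insert_le _ _

/-- the number of vertices of out-degree at least 2 is at most
`(|T| + 1)²` for any tracking set `T`. -/
theorem card_outdeg_ge_two_le {V : Type*} [Fintype V] [DecidableEq V]
    (E : V → V → Prop) [DecidableRel E] (s t : V)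
    (hacyc : DiAcyclic E)
    (hsrc : ∀ v : V, ¬ E v s) (hsink : ∀ v : V, ¬ E t v)
    (hvert : ∀ v : V, ∃ p : List V, DiPath E s t p ∧ v ∈ p)
    (T : Finset V) (hT : Tracking E s t T) :
    (Finset.univ.filter fun z : V => 2 ≤ outdeg E z).card ≤ (T.card + 1) ^ 2 :=
  card_outdeg_ge_two_le_general E s t hacyc hvert T hT
end

section
/- Let G be a finite directed acyclic graph with source s and sink t, and let T be a tracking set for G. If u and w are vertices such that some directed s-t path passes through u and then later through w, and there are two internally disjoint (from T) directed u-w paths Q₁ and Q₂ with V(Q₁) ∩ T = V(Q₂) ∩ T = ∅ (as internal vertices) and {u,w} ∩ T = ∅, then Q₁ = Q₂. -/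
/-!
Splicing `Q` into the given `s`-`t` path in place of its `u`-`w` segment gives an `s`-`t` path
(acyclicity keeps it simple) that meets `T` exactly where the rest of the original path does,
because `Q` avoids `T`. So splicing `Q₁` and `Q₂` yields two `s`-`t` paths with the same trace on
`T`; the tracking property makes them equal, and cancelling the common prefix and suffix gives
`Q₁ = Q₂`.
-/

namespace DiAcyclic

variable {V : Type*} {E : V → V → Prop}

theorem nodup_of_chain (hE : DiAcyclic E) {l : List V} (hl : l.IsChain E) : l.Nodup := by
  have : Trans (Relation.TransGen E) (Relation.TransGen E) (Relation.TransGen E) :=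
    ⟨Relation.TransGen.trans⟩
  have hpair : l.Pairwise (Relation.TransGen E) :=
    List.isChain_iff_pairwise.mp (List.IsChain.imp (fun _ _ => .single) hl)
  exact hpair.imp (S := (· ≠ ·)) fun hxy hxy_eq => hE _ (hxy_eq ▸ hxy)

end DiAcyclic

namespace List

variable {V : Type*} {E : V → V → Prop}

theorem IsChain.replace_infix {a b b' c : List V} (h : (a ++ b ++ c).IsChain E)
    (hb' : b'.IsChain E) (hhead : b'.head? = b.head?) (hlast : b'.getLast? = b.getLast?) :
    (a ++ b' ++ c).IsChain E := by
  obtain ⟨hab, hc, habc⟩ := isChain_append.mp h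
  obtain ⟨ha, -, hab'⟩ := isChain_append.mp hab
  have hlast' : (a ++ b').getLast? = (a ++ b).getLast? := by
    rw [getLast?_append, getLast?_append, hlast]
  refine (ha.append hb' ?_).append hc ?_
  · rw [hhead]; exact hab'
  · rw [hlast']; exact habc

end List

theorem DiPath.replace_infix {V : Type*} {E : V → V → Prop} {s t : V} (hE : DiAcyclic E)
    {a b b' c : List V} (hp : DiPath E s t (a ++ b ++ c)) (hb' : b'.IsChain E)
    (hhead : b'.head? = b.head?) (hlast : b'.getLast? = b.getLast?) :
    DiPath E s t (a ++ b' ++ c) := by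
  obtain ⟨hchain, -, hs, ht⟩ := hp
  have hchain' := List.IsChain.replace_infix hchain hb' hhead hlast
  refine ⟨hchain', hE.nodup_of_chain hchain', ?_, ?_⟩
  · rwa [List.head?_append, List.head?_append, hhead, ← List.head?_append, ← List.head?_append]
  · rwa [List.getLast?_append, List.getLast?_append, hlast, ← List.getLast?_append,
      ← List.getLast?_append]

theorem List.toFinset_append_inter_of_forall_notMem {V : Type*} [DecidableEq V] {T : Finset V}
    (a b c : List V) (hb : ∀ v ∈ b, v ∉ T) :
    (a ++ b ++ c).toFinset ∩ T = (a ++ c).toFinset ∩ T := by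
  ext v
  simp only [Finset.mem_inter, List.mem_toFinset, List.mem_append]
  have := hb v
  tauto

theorem unique_uw_path_avoiding_trackers_general {V : Type*} [DecidableEq V]
    (E : V → V → Prop) (s t : V)
    (hacyc : DiAcyclic E)
    (T : Finset V) (hT : Tracking E s t T)
    (u w : V)
    (hthrough : ∃ p pre mid suf : List V,
      DiPath E s t p ∧ p = pre ++ u :: (mid ++ w :: suf))
    (Q₁ Q₂ : List V)
    (hQ₁ : Q₁.Chain' E ∧ Q₁.Nodup ∧ Q₁.head? = some u ∧ Q₁.getLast? = some w ∧
      ∀ v ∈ Q₁, v ∉ T)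
    (hQ₂ : Q₂.Chain' E ∧ Q₂.Nodup ∧ Q₂.head? = some u ∧ Q₂.getLast? = some w ∧
      ∀ v ∈ Q₂, v ∉ T) :
    Q₁ = Q₂ := by
  obtain ⟨p, pre, mid, suf, hp, rfl⟩ := hthrough
  have hp : DiPath E s t (pre ++ (u :: mid ++ [w]) ++ suf) := by simpa using hp
  obtain ⟨hc₁, -, hu₁, hw₁, hT₁⟩ := hQ₁
  obtain ⟨hc₂, -, hu₂, hw₂, hT₂⟩ := hQ₂
  have hP₁ := hp.replace_infix hacyc hc₁ (by rw [hu₁]; rfl) (by rw [hw₁, List.getLast?_concat])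
  have hP₂ := hp.replace_infix hacyc hc₂ (by rw [hu₂]; rfl) (by rw [hw₂, List.getLast?_concat])
  have htrace : (pre ++ Q₁ ++ suf).toFinset ∩ T = (pre ++ Q₂ ++ suf).toFinset ∩ T := by
    rw [List.toFinset_append_inter_of_forall_notMem _ _ _ hT₁,
      List.toFinset_append_inter_of_forall_notMem _ _ _ hT₂]
  simpa using hT _ _ hP₁ hP₂ htrace

/-- if some directed `s`-`t` path passes through `u` and later through `w`,
`u, w ∉ T`, and `Q₁`, `Q₂` are directed `u`-`w` paths avoiding `T`, then `Q₁ = Q₂`. -/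
theorem unique_uw_path_avoiding_trackers {V : Type*} [Fintype V] [DecidableEq V]
    (E : V → V → Prop) (s t : V)
    (hacyc : DiAcyclic E)
    (hsrc : ∀ v : V, ¬ E v s) (hsink : ∀ v : V, ¬ E t v)
    (T : Finset V) (hT : Tracking E s t T)
    (u w : V) (hu : u ∉ T) (hw : w ∉ T)
    (hthrough : ∃ p pre mid suf : List V,
      DiPath E s t p ∧ p = pre ++ u :: (mid ++ w :: suf))
    (Q₁ Q₂ : List V)
    (hQ₁ : Q₁.Chain' E ∧ Q₁.Nodup ∧ Q₁.head? = some u ∧ Q₁.getLast? = some w ∧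
      ∀ v ∈ Q₁, v ∉ T)
    (hQ₂ : Q₂.Chain' E ∧ Q₂.Nodup ∧ Q₂.head? = some u ∧ Q₂.getLast? = some w ∧
      ∀ v ∈ Q₂, v ∉ T) :
    Q₁ = Q₂ :=
  unique_uw_path_avoiding_trackers_general E s t hacyc T hT u w hthrough Q₁ Q₂ hQ₁ hQ₂
end
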